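/- arXiv:1210.1669 — 3 statements merged into one kernel-verified Lean document; each statement's English description precedes it below -/
import Mathlib

section
/- For every integer m ≥ 0, the level-k quantum dimension of the weight mω_1 of D_r satisfies the product formula D(mω_1) = [sin(π(r−1+m)/(h+k)) / sin(π(r−1)/(h+k))] · ∏_{l=1}^{2r−3} [sin(π(l+m)/(h+k)) / sin(πl/(h+k))]. (The factors correspond to the 2r−2 positive roots α of D_r with α − α_1 ≥ 0, whose heights are 1, 2, …, 2r−3 with the height r−1 occurring twice.) -/
/-- Orthogonal coordinates `u_i(λ)` of `λ + ρ` for the weight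
`λ = λ_1 ω_1 + ⋯ + λ_r ω_r` of `D_r` given in fundamental-weight coordinates. -/
noncomputable def uCoord (r : ℕ) (lam : ℕ → ℤ) (i : ℕ) : ℝ :=
  if i = r then ((lam r : ℝ) - (lam (r - 1) : ℝ)) / 2
  else (∑ j ∈ Finset.Icc i (r - 2), (lam j : ℝ))
      + ((lam (r - 1) : ℝ) + (lam r : ℝ)) / 2 + ((r : ℝ) - (i : ℝ))

/-- The level-`k` quantum dimension of the weight `λ` of `D_r`
(`h = 2r - 2` is the Coxeter number), given by the product over the
positive roots `e_i - e_j`, `e_i + e_j` (`1 ≤ i < j ≤ r`). -/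
noncomputable def qdimD (r k : ℕ) (lam : ℕ → ℤ) : ℝ :=
  ∏ p ∈ (Finset.Icc 1 r ×ˢ Finset.Icc 1 r).filter (fun p => p.1 < p.2),
    (Real.sin (Real.pi * (uCoord r lam p.1 - uCoord r lam p.2) / (2 * (r : ℝ) - 2 + (k : ℝ)))
      * Real.sin (Real.pi * (uCoord r lam p.1 + uCoord r lam p.2) / (2 * (r : ℝ) - 2 + (k : ℝ))))
    / (Real.sin (Real.pi * ((p.2 : ℝ) - (p.1 : ℝ)) / (2 * (r : ℝ) - 2 + (k : ℝ)))
      * Real.sin (Real.pi * (2 * (r : ℝ) - (p.1 : ℝ) - (p.2 : ℝ)) / (2 * (r : ℝ) - 2 + (k : ℝ))))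

/-- One factor of the product defining `qdimD`. -/
noncomputable def Ffac (r k : ℕ) (lam : ℕ → ℤ) (p : ℕ × ℕ) : ℝ :=
    (Real.sin (Real.pi * (uCoord r lam p.1 - uCoord r lam p.2) / (2 * (r : ℝ) - 2 + (k : ℝ)))
      * Real.sin (Real.pi * (uCoord r lam p.1 + uCoord r lam p.2) / (2 * (r : ℝ) - 2 + (k : ℝ))))
    / (Real.sin (Real.pi * ((p.2 : ℝ) - (p.1 : ℝ)) / (2 * (r : ℝ) - 2 + (k : ℝ)))
      * Real.sin (Real.pi * (2 * (r : ℝ) - (p.1 : ℝ) - (p.2 : ℝ)) / (2 * (r : ℝ) - 2 + (k : ℝ))))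

/-- One factor `sin(π(l+m)/N)/sin(πl/N)` of the target product. -/
noncomputable def gfac (r k m : ℕ) (l : ℕ) : ℝ :=
  Real.sin (Real.pi * ((l : ℝ) + (m : ℝ)) / (2 * (r : ℝ) - 2 + (k : ℝ)))
    / Real.sin (Real.pi * (l : ℝ) / (2 * (r : ℝ) - 2 + (k : ℝ)))

lemma qdimD_eq_prod (r k : ℕ) (lam : ℕ → ℤ) :
    qdimD r k lam = ∏ p ∈ (Finset.Icc 1 r ×ˢ Finset.Icc 1 r).filter (fun p => p.1 < p.2),
      Ffac r k lam p := rfl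

lemma sin_pos_aux (r k : ℕ) (hr : 4 ≤ r) (hk : 1 ≤ k) (x : ℝ)
    (hx : 0 < x) (hxN : x < 2 * (r : ℝ) - 2 + (k : ℝ)) :
    0 < Real.sin (Real.pi * x / (2 * (r : ℝ) - 2 + (k : ℝ))) := by
  have hrR : (4:ℝ) ≤ (r:ℝ) := by exact_mod_cast hr
  have hkR : (1:ℝ) ≤ (k:ℝ) := by exact_mod_cast hk
  have hN0 : (0:ℝ) < 2 * (r : ℝ) - 2 + (k : ℝ) := by linarith
  apply Real.sin_pos_of_pos_of_lt_pi
  · positivity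
  · rw [div_lt_iff₀ hN0]
    nlinarith [Real.pi_pos]

lemma uCoord_mOmega1 (r m : ℕ) (hr : 4 ≤ r) (i : ℕ) (hi : i ∈ Finset.Icc 1 r) :
    uCoord r (fun j => if j = 1 then (m : ℤ) else 0) i
      = (if i = 1 then (m:ℝ) else 0) + ((r:ℝ) - (i:ℝ)) := by
  rw [Finset.mem_Icc] at hi
  have hr1 : r ≠ 1 := by omega
  have hrm1 : r - 1 ≠ 1 := by omega
  unfold uCoord
  by_cases hir : i = r
  · subst hir
    simp [hr1, hrm1]
  · rw [if_neg hir]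
    have hsum : (∑ j ∈ Finset.Icc i (r - 2), (((if j = 1 then (m : ℤ) else 0) : ℤ) : ℝ))
        = if i = 1 then (m:ℝ) else 0 := by
      have hc : ∀ j, (((if j = 1 then (m : ℤ) else 0) : ℤ) : ℝ) = if j = 1 then (m:ℝ) else 0 := by
        intro j; by_cases hj : j = 1 <;> simp [hj]
      simp_rw [hc]
      rw [Finset.sum_ite_eq' (Finset.Icc i (r-2)) 1 (fun _ => (m:ℝ))]
      by_cases h1 : (1:ℕ) ∈ Finset.Icc i (r-2)
      · rw [Finset.mem_Icc] at h1
        rw [if_pos (by rw [Finset.mem_Icc]; omega : (1:ℕ) ∈ Finset.Icc i (r-2)),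
          if_pos (by omega : i = 1)]
      · rw [Finset.mem_Icc] at h1
        rw [if_neg (by rw [Finset.mem_Icc]; omega : ¬(1:ℕ) ∈ Finset.Icc i (r-2)),
          if_neg (by omega : ¬ i = 1)]
    rw [hsum]
    simp [hr1, hrm1]

lemma Ffac_eq_one (r k m : ℕ) (hr : 4 ≤ r) (hk : 1 ≤ k) (p : ℕ × ℕ)
    (h11 : 2 ≤ p.1) (h12 : p.1 ≤ r) (hlt : p.1 < p.2) (h22 : p.2 ≤ r) :
    Ffac r k (fun j => if j = 1 then (m : ℤ) else 0) p = 1 := by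
  have hu1 := uCoord_mOmega1 r m hr p.1 (by rw [Finset.mem_Icc]; omega)
  have hu2 := uCoord_mOmega1 r m hr p.2 (by rw [Finset.mem_Icc]; omega)
  rw [if_neg (by omega : ¬ p.1 = 1)] at hu1
  rw [if_neg (by omega : ¬ p.2 = 1)] at hu2
  rw [zero_add] at hu1 hu2
  unfold Ffac
  rw [hu1, hu2]
  have a1 : ((r:ℝ) - (p.1:ℝ)) - ((r:ℝ) - (p.2:ℝ)) = (p.2:ℝ) - (p.1:ℝ) := by ring
  have a2 : ((r:ℝ) - (p.1:ℝ)) + ((r:ℝ) - (p.2:ℝ)) = 2*(r:ℝ) - (p.1:ℝ) - (p.2:ℝ) := by ring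
  rw [a1, a2]
  have hrR : (4:ℝ) ≤ (r:ℝ) := by exact_mod_cast hr
  have hkR : (1:ℝ) ≤ (k:ℝ) := by exact_mod_cast hk
  have c1 : (2:ℝ) ≤ (p.1:ℝ) := by exact_mod_cast h11
  have c2 : (p.1:ℝ) + 1 ≤ (p.2:ℝ) := by exact_mod_cast (by omega : p.1 + 1 ≤ p.2)
  have c3 : (p.2:ℝ) ≤ (r:ℝ) := by exact_mod_cast h22
  apply div_self
  apply ne_of_gt
  apply mul_pos
  · exact sin_pos_aux r k hr hk _ (by linarith) (by linarith)
  · exact sin_pos_aux r k hr hk _ (by linarith) (by linarith)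

lemma Ffac_one_j (r k m : ℕ) (hr : 4 ≤ r) (hk : 1 ≤ k) (j : ℕ)
    (hj2 : 2 ≤ j) (hjr : j ≤ r) :
    Ffac r k (fun i => if i = 1 then (m : ℤ) else 0) (1, j)
      = gfac r k m (j - 1) * gfac r k m (2*r - 1 - j) := by
  have hu1 := uCoord_mOmega1 r m hr 1 (by rw [Finset.mem_Icc]; omega)
  have hu2 := uCoord_mOmega1 r m hr j (by rw [Finset.mem_Icc]; omega)
  rw [if_pos rfl] at hu1
  rw [if_neg (by omega : ¬ j = 1), zero_add] at hu2
  have e1 : ((j - 1 : ℕ) : ℝ) = (j:ℝ) - 1 := by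
    rw [Nat.cast_sub (by omega)]; norm_num
  have e2 : ((2*r - 1 - j : ℕ) : ℝ) = 2*(r:ℝ) - 1 - (j:ℝ) := by
    rw [Nat.cast_sub (by omega), Nat.cast_sub (by omega)]; push_cast; ring
  unfold Ffac gfac
  rw [hu1, hu2, e1, e2, div_mul_div_comm]
  norm_num
  ring_nf

/-- The product formula for the level-`k` quantum dimension of `mω_1` over the
`2r - 2` positive roots `α` of `D_r` with `α - α_1 ≥ 0`, whose heights are
`1, 2, …, 2r-3` with height `r - 1` occurring twice. -/
theorem stmt2 (r k : ℕ) (hr : 4 ≤ r) (hk : 1 ≤ k) (m : ℕ) :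
    qdimD r k (fun j => if j = 1 then (m : ℤ) else 0) =
      (Real.sin (Real.pi * ((r : ℝ) - 1 + (m : ℝ)) / (2 * (r : ℝ) - 2 + (k : ℝ)))
        / Real.sin (Real.pi * ((r : ℝ) - 1) / (2 * (r : ℝ) - 2 + (k : ℝ)))) *
      ∏ l ∈ Finset.Icc 1 (2 * r - 3),
        Real.sin (Real.pi * ((l : ℝ) + (m : ℝ)) / (2 * (r : ℝ) - 2 + (k : ℝ)))
          / Real.sin (Real.pi * (l : ℝ) / (2 * (r : ℝ) - 2 + (k : ℝ))) := by
  set lam : ℕ → ℤ := fun j => if j = 1 then (m : ℤ) else 0 with hlam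
  set S := (Finset.Icc 1 r ×ˢ Finset.Icc 1 r).filter (fun p : ℕ × ℕ => p.1 < p.2) with hS
  -- rewrite RHS in terms of gfac
  have hRfirst : Real.sin (Real.pi * ((r : ℝ) - 1 + (m : ℝ)) / (2 * (r : ℝ) - 2 + (k : ℝ)))
      / Real.sin (Real.pi * ((r : ℝ) - 1) / (2 * (r : ℝ) - 2 + (k : ℝ))) = gfac r k m (r - 1) := by
    unfold gfac
    rw [Nat.cast_sub (by omega : 1 ≤ r)]
    norm_num
  have hRprod : ∀ l : ℕ, Real.sin (Real.pi * ((l : ℝ) + (m : ℝ)) / (2 * (r : ℝ) - 2 + (k : ℝ)))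
      / Real.sin (Real.pi * (l : ℝ) / (2 * (r : ℝ) - 2 + (k : ℝ))) = gfac r k m l := fun _ => rfl
  rw [hRfirst]
  simp_rw [hRprod]
  -- split the LHS product
  rw [qdimD_eq_prod, ← hS,
    ← Finset.prod_filter_mul_prod_filter_not S (fun p : ℕ × ℕ => p.1 = 1) (Ffac r k lam)]
  have h2 : ∀ p ∈ S.filter (fun p : ℕ × ℕ => ¬ p.1 = 1), Ffac r k lam p = 1 := by
    intro p hp
    simp only [hS, Finset.mem_filter, Finset.mem_product, Finset.mem_Icc] at hp
    exact Ffac_eq_one r k m hr hk p (by omega) (by omega) (by omega) (by omega)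
  rw [Finset.prod_eq_one h2, mul_one]
  -- reindex the p.1 = 1 part over j ∈ Icc 2 r
  have h1 : ∏ p ∈ S.filter (fun p : ℕ × ℕ => p.1 = 1), Ffac r k lam p
      = ∏ j ∈ Finset.Icc 2 r, Ffac r k lam (1, j) := by
    apply Finset.prod_nbij' (fun p : ℕ × ℕ => p.2) (fun j => ((1:ℕ), j))
    · intro p hp
      simp only [hS, Finset.mem_filter, Finset.mem_product, Finset.mem_Icc] at hp
      rw [Finset.mem_Icc]; omega
    · intro j hj
      rw [Finset.mem_Icc] at hj
      simp only [hS, Finset.mem_filter, Finset.mem_product, Finset.mem_Icc]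
      refine ⟨⟨⟨⟨?_, ?_⟩, ?_, ?_⟩, ?_⟩, trivial⟩ <;> omega
    · rintro ⟨a, b⟩ hp
      simp only [hS, Finset.mem_filter, Finset.mem_product, Finset.mem_Icc] at hp
      simp [hp.2]
    · intro j hj; rfl
    · rintro ⟨a, b⟩ hp
      simp only [hS, Finset.mem_filter, Finset.mem_product, Finset.mem_Icc] at hp
      rw [hp.2]
  rw [h1]
  have hprod : ∏ j ∈ Finset.Icc 2 r, Ffac r k lam (1, j)
      = ∏ j ∈ Finset.Icc 2 r, (gfac r k m (j - 1) * gfac r k m (2*r - 1 - j)) :=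
    Finset.prod_congr rfl (fun j hj => by
      rw [Finset.mem_Icc] at hj
      exact Ffac_one_j r k m hr hk j hj.1 hj.2)
  rw [hprod, Finset.prod_mul_distrib]
  -- reindex the two products
  have hA : ∏ j ∈ Finset.Icc 2 r, gfac r k m (j - 1)
      = ∏ l ∈ Finset.Icc 1 (r - 1), gfac r k m l := by
    apply Finset.prod_nbij' (fun j => j - 1) (fun l => l + 1)
    · intro a ha; rw [Finset.mem_Icc] at *; omega
    · intro a ha; rw [Finset.mem_Icc] at *; omega
    · intro a ha; rw [Finset.mem_Icc] at ha; omega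
    · intro a ha; rw [Finset.mem_Icc] at ha; omega
    · intro a _; rfl
  have hB : ∏ j ∈ Finset.Icc 2 r, gfac r k m (2*r - 1 - j)
      = ∏ l ∈ Finset.Icc (r - 1) (2*r - 3), gfac r k m l := by
    apply Finset.prod_nbij' (fun j => 2*r - 1 - j) (fun l => 2*r - 1 - l)
    · intro a ha; rw [Finset.mem_Icc] at *; omega
    · intro a ha; rw [Finset.mem_Icc] at *; omega
    · intro a ha; rw [Finset.mem_Icc] at ha; omega
    · intro a ha; rw [Finset.mem_Icc] at ha; omega
    · intro a _; rfl
  rw [hA, hB]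
  -- split the RHS product
  have hIoc : ∀ a b : ℕ, Finset.Icc (a + 1) b = Finset.Ioc a b := by
    intro a b; ext x; rw [Finset.mem_Icc, Finset.mem_Ioc]; omega
  have hsplit : ∏ l ∈ Finset.Icc 1 (2*r - 3), gfac r k m l
      = (∏ l ∈ Finset.Icc 1 (r - 2), gfac r k m l)
        * ∏ l ∈ Finset.Icc (r - 1) (2*r - 3), gfac r k m l := by
    rw [show Finset.Icc 1 (2*r-3) = Finset.Ioc 0 (2*r-3) from hIoc 0 _,
      show Finset.Icc 1 (r-2) = Finset.Ioc 0 (r-2) from hIoc 0 _,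
      show Finset.Icc (r-1) (2*r-3) = Finset.Ioc (r-2) (2*r-3) from by
        rw [show r - 1 = (r-2)+1 by omega]; exact hIoc _ _]
    exact (Finset.prod_Ioc_consecutive _ (by omega) (by omega)).symm
  have hstep : ∏ l ∈ Finset.Icc 1 (r - 1), gfac r k m l
      = (∏ l ∈ Finset.Icc 1 (r - 2), gfac r k m l) * gfac r k m (r - 1) := by
    rw [show r - 1 = (r-2)+1 by omega, Finset.prod_Icc_succ_top (by omega)]
  rw [hstep, hsplit]
  ring
end

section
/- Let a be odd with 3 ≤ a ≤ r−2 and let k_3, k_5, …, k_a be nonnegative integers. (i) If 2(k_3 + k_5 + ⋯ + k_a) = k, then D(ω_1 + k_3ω_3 + k_5ω_5 + ⋯ + k_aω_a) = 0. (ii) If 2(k_3 + k_5 + ⋯ + k_a) = k + 2, then D(k_3ω_3 + k_5ω_5 + ⋯ + k_aω_a) = 0. (These are the weights whose level-k affinizations have labels (k_1,k_0) = (1,−1), respectively (0,−2), and are fixed under the shifted action of the odd-length affine Weyl group elements s_0, respectively s_0 s_2 s_0.) -/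
open Finset

/-- The weight `k_3 ω_3 + k_5 ω_5 + ⋯ + k_a ω_a`, with `k_j = c j`. -/
def oddWeight (a : ℕ) (c : ℕ → ℕ) (j : ℕ) : ℤ :=
  if 3 ≤ j ∧ j ≤ a ∧ j % 2 = 1 then (c j : ℤ) else 0

theorem qdimD_eq_zero_of_uCoord_add_eq {r k i j : ℕ} {lam : ℕ → ℤ} (hi : 1 ≤ i) (hij : i < j)
    (hj : j ≤ r) (h : uCoord r lam i + uCoord r lam j = 2 * (r : ℝ) - 2 + k) :
    qdimD r k lam = 0 := by
  refine prod_eq_zero (i := (i, j)) (by simp only [mem_filter, mem_product, mem_Icc]; omega) ?_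
  have hsin : Real.sin (Real.pi * (2 * (r : ℝ) - 2 + k) / (2 * (r : ℝ) - 2 + k)) = 0 := by
    rcases eq_or_ne (2 * (r : ℝ) - 2 + k) 0 with hN | hN
    · simp [hN]
    · rw [mul_div_assoc, div_self hN, mul_one, Real.sin_pi]
  rw [h, hsin, mul_zero, zero_div]

theorem uCoord_eq_add_uCoord_succ {r i : ℕ} (lam : ℕ → ℤ) (hi : i + 2 ≤ r) :
    uCoord r lam i = lam i + 1 + uCoord r lam (i + 1) := by
  rw [uCoord, uCoord, if_neg (by omega), if_neg (by omega),
    ← insert_Icc_add_one_left_eq_Icc (show i ≤ r - 2 by omega), sum_insert (by simp)]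
  push_cast
  ring

theorem sum_Icc_oddWeight {r a j : ℕ} (c : ℕ → ℕ) (hj : j ≤ 3) (har : a ≤ r - 2) :
    ∑ i ∈ Icc j (r - 2), (oddWeight a c i : ℝ) = ∑ i ∈ (Icc 3 a).filter (· % 2 = 1), (c i : ℝ) := by
  simp only [oddWeight, apply_ite (Int.cast : ℤ → ℝ), Int.cast_zero, Int.cast_natCast]
  rw [← sum_filter]
  exact sum_congr (by ext i; simp only [mem_filter, mem_Icc]; omega) fun _ _ => rfl

theorem uCoord_eq_of_eq_oddWeight {r a j : ℕ} {lam : ℕ → ℤ} (c : ℕ → ℕ) (hj : j ≤ 3) (hjr : j < r)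
    (har : a ≤ r - 2) (h : ∀ i, j ≤ i → lam i = oddWeight a c i) :
    uCoord r lam j = ∑ i ∈ (Icc 3 a).filter (· % 2 = 1), (c i : ℝ) + (r - j) := by
  have hvanish : ∀ i, r - 1 ≤ i → lam i = 0 := fun i hi => by
    rw [h i (by omega), oddWeight, if_neg (by omega)]
  rw [uCoord, if_neg hjr.ne, hvanish (r - 1) le_rfl, hvanish r (by omega),
    ← sum_Icc_oddWeight c hj har, sum_congr rfl fun i hi => by rw [h i (mem_Icc.1 hi).1]]
  push_cast
  ring

theorem stmt9_general (r k : ℕ) (hr : 4 ≤ r)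
    (a : ℕ) (har : a ≤ r - 2)
    (c : ℕ → ℕ) :
    (2 * (∑ j ∈ (Finset.Icc 3 a).filter (fun j => j % 2 = 1), c j) = k →
      qdimD r k (fun j =>
        if j = 1 then 1 else if 3 ≤ j ∧ j ≤ a ∧ j % 2 = 1 then (c j : ℤ) else 0) = 0) ∧
    (2 * (∑ j ∈ (Finset.Icc 3 a).filter (fun j => j % 2 = 1), c j) = k + 2 →
      qdimD r k (fun j =>
        if 3 ≤ j ∧ j ≤ a ∧ j % 2 = 1 then (c j : ℤ) else 0) = 0) := by
  set T : ℝ := ∑ i ∈ (Icc 3 a).filter (· % 2 = 1), (c i : ℝ)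
  constructor
  · intro hsum
    have hT : 2 * T = k := by simp only [T]; exact_mod_cast hsum
    set lam : ℕ → ℤ := fun j => if j = 1 then 1 else oddWeight a c j
    change qdimD r k lam = 0
    have hu2 : uCoord r lam 2 = T + (r - 2) :=
      uCoord_eq_of_eq_oddWeight c (by norm_num) (by omega) har fun i hi => if_neg (by omega)
    have hu1 : uCoord r lam 1 = 2 + uCoord r lam 2 := by
      rw [uCoord_eq_add_uCoord_succ lam (by omega)]
      norm_num [lam]
    refine qdimD_eq_zero_of_uCoord_add_eq (i := 1) (j := 2) le_rfl one_lt_two (by omega) ?_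
    rw [hu1, hu2]
    linarith
  · intro hsum
    have hT : 2 * T = k + 2 := by simp only [T]; exact_mod_cast hsum
    change qdimD r k (oddWeight a c) = 0
    have hu3 : uCoord r (oddWeight a c) 3 = T + (r - 3) :=
      uCoord_eq_of_eq_oddWeight c le_rfl (by omega) har fun i _ => rfl
    have hu1 : uCoord r (oddWeight a c) 1 = 2 + uCoord r (oddWeight a c) 3 := by
      rw [uCoord_eq_add_uCoord_succ _ (by omega), uCoord_eq_add_uCoord_succ _ (by omega)]
      norm_num [oddWeight]
      ring
    refine qdimD_eq_zero_of_uCoord_add_eq (i := 1) (j := 3) le_rfl (by norm_num) (by omega) ?_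
    rw [hu1, hu3]
    linarith

/-- For odd `a` with `3 ≤ a ≤ r-2` and nonnegative integers `k_3, k_5, …, k_a`:
(i) if `2(k_3 + ⋯ + k_a) = k` then `D(ω_1 + k_3ω_3 + ⋯ + k_aω_a) = 0`;
(ii) if `2(k_3 + ⋯ + k_a) = k + 2` then `D(k_3ω_3 + ⋯ + k_aω_a) = 0`. -/
theorem stmt9 (r k : ℕ) (hr : 4 ≤ r) (hk : 1 ≤ k)
    (a : ℕ) (ha3 : 3 ≤ a) (har : a ≤ r - 2) (haodd : a % 2 = 1)
    (c : ℕ → ℕ) :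
    (2 * (∑ j ∈ (Finset.Icc 3 a).filter (fun j => j % 2 = 1), c j) = k →
      qdimD r k (fun j =>
        if j = 1 then 1 else if 3 ≤ j ∧ j ≤ a ∧ j % 2 = 1 then (c j : ℤ) else 0) = 0) ∧
    (2 * (∑ j ∈ (Finset.Icc 3 a).filter (fun j => j % 2 = 1), c j) = k + 2 →
      qdimD r k (fun j =>
        if 3 ≤ j ∧ j ≤ a ∧ j % 2 = 1 then (c j : ℤ) else 0) = 0) :=
  stmt9_general r k hr a har c
end

section
/- Suppose k ≥ 2 is even and set s = k/2. If a is odd with 3 ≤ a ≤ r−2, then z^{(a)}_{s−1} = z^{(a)}_{s+1}. -/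
/-- The quantum dimension solution `z^{(a)}_m` of the `Q`-system of type `D_r`:
the specialization `Q^{(a)}_m(ρ/(h+k))` of the classical characters of the
Kirillov–Reshetikhin modules of type `D_r`. -/
noncomputable def zD (r k a m : ℕ) : ℝ :=
  if a = r - 1 ∨ a = r then
    qdimD r k (fun j => if j = a then (m : ℤ) else 0)
  else if a % 2 = 1 then
    ∑ c ∈ (Fintype.piFinset (fun _ : Fin ((a + 1) / 2) => Finset.range (m + 1))).filter
        (fun c => ∑ i, c i = m),
      qdimD r k (fun j => ∑ i : Fin ((a + 1) / 2), if j = 2 * (i : ℕ) + 1 then (c i : ℤ) else 0)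
  else
    ∑ c ∈ (Fintype.piFinset (fun _ : Fin (a / 2) => Finset.range (m + 1))).filter
        (fun c => ∑ i, c i ≤ m),
      qdimD r k (fun j => ∑ i : Fin (a / 2), if j = 2 * (i : ℕ) + 2 then (c i : ℤ) else 0)

/-- The weight associated to a composition `c`. -/
def lamOf (n : ℕ) (c : Fin n → ℕ) : ℕ → ℤ :=
  fun j => ∑ i : Fin n, if j = 2 * (i : ℕ) + 1 then (c i : ℤ) else 0

lemma lam_zero (n j : ℕ) (c : Fin n → ℕ) (h : ∀ i : Fin n, j ≠ 2 * (i : ℕ) + 1) :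
    lamOf n c j = 0 :=
  Finset.sum_eq_zero fun i _ => if_neg (h i)

lemma sum_lam_Icc (r n t : ℕ) (c : Fin n → ℕ) :
    (∑ j ∈ Finset.Icc t (r - 2), ((lamOf n c j : ℤ) : ℝ))
      = ∑ i : Fin n, if 2 * (i : ℕ) + 1 ∈ Finset.Icc t (r - 2) then (c i : ℝ) else 0 := by
  unfold lamOf
  push_cast
  rw [Finset.sum_comm]
  exact Finset.sum_congr rfl fun i _ => Finset.sum_ite_eq' _ _ _

lemma u1_eq (r n : ℕ) (c : Fin n → ℕ) (hr : 4 ≤ r) (hn : 2 * n - 1 ≤ r - 2) :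
    uCoord r (lamOf n c) 1 = (∑ i : Fin n, (c i : ℝ)) + ((r : ℝ) - 1) := by
  rw [uCoord, if_neg (show (1 : ℕ) ≠ r by omega),
    lam_zero n (r - 1) c (fun i => by have := i.isLt; omega),
    lam_zero n r c (fun i => by have := i.isLt; omega), sum_lam_Icc,
    Finset.sum_congr rfl (fun i (_ : i ∈ Finset.univ) =>
      if_pos (by simp only [Finset.mem_Icc]; have := i.isLt; omega))]
  push_cast
  ring

lemma u23_eq (r n t : ℕ) [NeZero n] (c : Fin n → ℕ) (hr : 4 ≤ r)
    (hn : 2 * n - 1 ≤ r - 2) (ht : t = 2 ∨ t = 3) :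
    uCoord r (lamOf n c) t = (∑ i : Fin n, (c i : ℝ)) - (c 0 : ℝ) + ((r : ℝ) - (t : ℝ)) := by
  rw [uCoord, if_neg (show t ≠ r by omega),
    lam_zero n (r - 1) c (fun i => by have := i.isLt; omega),
    lam_zero n r c (fun i => by have := i.isLt; omega), sum_lam_Icc]
  have h1 : ∀ i : Fin n, (if 2 * (i : ℕ) + 1 ∈ Finset.Icc t (r - 2) then (c i : ℝ) else 0)
      = (c i : ℝ) - (if i = (0 : Fin n) then (c i : ℝ) else 0) := by
    intro i
    by_cases h : i = 0
    · subst h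
      rw [if_neg (by simp only [Finset.mem_Icc, Fin.val_zero]; omega), if_pos rfl]
      ring
    · have hi : (i : ℕ) ≠ 0 := fun h0 => h (Fin.ext (by simp [h0]))
      rw [if_pos (by simp only [Finset.mem_Icc]; have := i.isLt; omega), if_neg h, sub_zero]
  rw [Finset.sum_congr rfl (fun i _ => h1 i), Finset.sum_sub_distrib, Fintype.sum_ite_eq']
  push_cast
  ring

lemma lam_update (n : ℕ) [NeZero n] (c : Fin n → ℕ) (v : ℕ) (j : ℕ) (hj : j ≠ 1) :
    lamOf n (Function.update c 0 v) j = lamOf n c j := by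
  refine Finset.sum_congr rfl fun i _ => ?_
  by_cases h : j = 2 * (i : ℕ) + 1
  · have hi : i ≠ 0 := by
      intro h0
      subst h0
      simp only [Fin.val_zero] at h
      omega
    rw [Function.update_of_ne hi]
  · rw [if_neg h, if_neg h]

lemma uCoord_congr (r : ℕ) (lam lam' : ℕ → ℤ) (i : ℕ) (hr : 4 ≤ r) (hi : 2 ≤ i)
    (h : ∀ j, j ≠ 1 → lam j = lam' j) :
    uCoord r lam i = uCoord r lam' i := by
  rw [uCoord, uCoord, h r (by omega), h (r - 1) (by omega)]
  by_cases hir : i = r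
  · rw [if_pos hir, if_pos hir]
  · rw [if_neg hir, if_neg hir,
      Finset.sum_congr rfl (fun j hj => by
        rw [h j (by simp only [Finset.mem_Icc] at hj; omega)])]

lemma sum_update (n : ℕ) [NeZero n] (c : Fin n → ℕ) (v : ℕ) :
    (∑ i, Function.update c 0 v i) + c 0 = (∑ i, c i) + v := by
  rw [Finset.sum_update_of_mem (Finset.mem_univ 0),
    Finset.sum_eq_sum_sdiff_singleton_add (Finset.mem_univ (0 : Fin n)) c]
  omega

lemma qdim_shift (r k n : ℕ) [NeZero n] (c : Fin n → ℕ)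
    (hr : 4 ≤ r) (hn : 2 * n - 1 ≤ r - 2)
    (hsum : 2 * (∑ i, c i) + 2 = k) :
    qdimD r k (lamOf n (Function.update c 0 (c 0 + 2))) = qdimD r k (lamOf n c) := by
  unfold qdimD
  refine Finset.prod_congr rfl fun p hp => ?_
  simp only [Finset.mem_filter, Finset.mem_product, Finset.mem_Icc] at hp
  obtain ⟨⟨⟨h11, h1r⟩, h21, h2r⟩, hlt⟩ := hp
  have hu2 : uCoord r (lamOf n (Function.update c 0 (c 0 + 2))) p.2
      = uCoord r (lamOf n c) p.2 :=
    uCoord_congr r _ _ p.2 hr (by omega) (fun j hj => lam_update n c _ j hj)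
  by_cases hp1 : p.1 = 1
  · rw [hp1, hu2]
    set N : ℝ := 2 * (r : ℝ) - 2 + (k : ℝ) with hNdef
    have hr4 : (4 : ℝ) ≤ (r : ℝ) := by exact_mod_cast hr
    have hk0 : (0 : ℝ) ≤ (k : ℝ) := Nat.cast_nonneg k
    have hNpos : 0 < N := by rw [hNdef]; linarith
    have hNne : N ≠ 0 := ne_of_gt hNpos
    have hkR : (k : ℝ) = 2 * (∑ i, (c i : ℝ)) + 2 := by
      have h0 := congrArg (fun x : ℕ => (x : ℝ)) hsum
      push_cast at h0
      linarith
    have hMn : (∑ i, Function.update c 0 (c 0 + 2) i) = (∑ i, c i) + 2 := by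
      have h1 := sum_update n c (c 0 + 2)
      omega
    have hM : (∑ i, ((Function.update c 0 (c 0 + 2)) i : ℝ)) = (∑ i, (c i : ℝ)) + 2 := by
      have h2 := congrArg (fun x : ℕ => (x : ℝ)) hMn
      push_cast at h2
      exact h2
    have key : uCoord r (lamOf n (Function.update c 0 (c 0 + 2))) 1
        = N - uCoord r (lamOf n c) 1 := by
      rw [u1_eq r n _ hr hn, u1_eq r n c hr hn, hM, hNdef, hkR]
      ring
    rw [key]
    set u := uCoord r (lamOf n c) 1
    set w := uCoord r (lamOf n c) p.2
    have e1 : Real.pi * ((N - u) - w) / N = Real.pi - Real.pi * (u + w) / N := by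
      field_simp
      ring
    have e2 : Real.pi * ((N - u) + w) / N = Real.pi - Real.pi * (u - w) / N := by
      field_simp
      ring
    rw [e1, e2, Real.sin_pi_sub, Real.sin_pi_sub, mul_comm]
  · rw [uCoord_congr r _ _ p.1 hr (by omega) (fun j hj => lam_update n c _ j hj), hu2]

lemma qdim_vanish (r k n : ℕ) [NeZero n] (c : Fin n → ℕ)
    (hr : 4 ≤ r) (hn : 2 * n - 1 ≤ r - 2) (h0 : c 0 ≤ 1)
    (hsum : 2 * (∑ i, c i) = k + 2) :
    qdimD r k (lamOf n c) = 0 := by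
  unfold qdimD
  refine Finset.prod_eq_zero (i := ((1 : ℕ), 3 - c 0)) ?_ ?_
  · simp only [Finset.mem_filter, Finset.mem_product, Finset.mem_Icc]
    omega
  · dsimp only
    have hMR : (2 : ℝ) * (∑ i, (c i : ℝ)) = (k : ℝ) + 2 := by
      have h1 := congrArg (fun x : ℕ => (x : ℝ)) hsum
      push_cast at h1
      linarith
    have hu1 := u1_eq r n c hr hn
    have huj : uCoord r (lamOf n c) (3 - c 0) = (∑ i : Fin n, (c i : ℝ)) + ((r : ℝ) - 3) := by
      rcases Nat.le_one_iff_eq_zero_or_eq_one.mp h0 with h | h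
      · have h3 := u23_eq r n 3 c hr hn (Or.inr rfl)
        rw [h] at h3 ⊢
        rw [show (3 : ℕ) - 0 = 3 from rfl, h3]
        push_cast
        ring
      · have h3 := u23_eq r n 2 c hr hn (Or.inl rfl)
        rw [h] at h3 ⊢
        rw [show (3 : ℕ) - 1 = 2 from rfl, h3]
        push_cast
        ring
    rw [hu1, huj]
    have hr4 : (4 : ℝ) ≤ (r : ℝ) := by exact_mod_cast hr
    have hNne : (2 * (r : ℝ) - 2 + (k : ℝ)) ≠ 0 := by
      have hk0 : (0 : ℝ) ≤ (k : ℝ) := Nat.cast_nonneg k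
      intro h'
      linarith
    have hS : ((∑ i : Fin n, (c i : ℝ)) + ((r : ℝ) - 1)) + ((∑ i : Fin n, (c i : ℝ)) + ((r : ℝ) - 3))
        = 2 * (r : ℝ) - 2 + (k : ℝ) := by linarith
    rw [hS, mul_div_assoc, mul_div_cancel_right₀ Real.pi hNne, Real.sin_pi, zero_div, mul_zero]

/-- For even level `k ≥ 2` with `s = k/2` and odd `a` with `3 ≤ a ≤ r-2`,
`z^{(a)}_{s-1} = z^{(a)}_{s+1}`. -/
theorem stmt10 (r k : ℕ) (hr : 4 ≤ r) (hk : 2 ≤ k) (hkev : k % 2 = 0)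
    (a : ℕ) (ha3 : 3 ≤ a) (har : a ≤ r - 2) (haodd : a % 2 = 1) :
    zD r k a (k / 2 - 1) = zD r k a (k / 2 + 1) := by
  have har' : ¬(a = r - 1 ∨ a = r) := by omega
  simp only [zD, if_neg har', if_pos haodd]
  set n := (a + 1) / 2 with hn_def
  haveI : NeZero n := ⟨by omega⟩
  have hn2 : 2 * n - 1 ≤ r - 2 := by omega
  set s := k / 2 with hs_def
  have hs1 : 1 ≤ s := by omega
  have hks : k = 2 * s := by omega
  have key : ∑ c ∈ (Fintype.piFinset (fun _ : Fin n => Finset.range (s - 1 + 1))).filter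
        (fun c => ∑ i, c i = s - 1), qdimD r k (lamOf n c)
      = ∑ c ∈ ((Fintype.piFinset (fun _ : Fin n => Finset.range (s + 1 + 1))).filter
        (fun c => ∑ i, c i = s + 1)).filter (fun c => 2 ≤ c 0), qdimD r k (lamOf n c) := by
    refine Finset.sum_nbij' (i := fun c => Function.update c 0 (c 0 + 2))
      (j := fun c => Function.update c 0 (c 0 - 2)) ?_ ?_ ?_ ?_ ?_
    · intro c hc
      obtain ⟨hcT, hcs⟩ := Finset.mem_filter.mp hc
      have hc0 : c 0 ≤ ∑ i, c i :=
        Finset.single_le_sum (fun i _ => Nat.zero_le (c i)) (Finset.mem_univ 0)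
      have hupd := sum_update n c (c 0 + 2)
      refine Finset.mem_filter.mpr ⟨Finset.mem_filter.mpr ⟨?_, by omega⟩, ?_⟩
      · rw [Fintype.mem_piFinset]
        intro i
        rw [Finset.mem_range]
        have hci : c i ≤ ∑ i, c i :=
          Finset.single_le_sum (fun i _ => Nat.zero_le (c i)) (Finset.mem_univ i)
        by_cases h : i = 0
        · subst h
          rw [Function.update_self]
          omega
        · rw [Function.update_of_ne h]
          omega
      · rw [Function.update_self]
        omega
    · intro b hb
      obtain ⟨hbB, hb0⟩ := Finset.mem_filter.mp hb
      obtain ⟨hbT, hbs⟩ := Finset.mem_filter.mp hbB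
      have hsplit : (∑ i, b i) = (∑ i ∈ Finset.univ \ {(0 : Fin n)}, b i) + b 0 :=
        Finset.sum_eq_sum_sdiff_singleton_add (Finset.mem_univ (0 : Fin n)) b
      have hupd := sum_update n b (b 0 - 2)
      refine Finset.mem_filter.mpr ⟨?_, by omega⟩
      rw [Fintype.mem_piFinset]
      intro i
      rw [Finset.mem_range]
      by_cases h : i = 0
      · subst h
        rw [Function.update_self]
        omega
      · rw [Function.update_of_ne h]
        have hi' : i ∈ Finset.univ \ {(0 : Fin n)} := by simp [h]
        have hbi : b i ≤ ∑ i ∈ Finset.univ \ {(0 : Fin n)}, b i :=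
          Finset.single_le_sum (fun i _ => Nat.zero_le (b i)) hi'
        omega
    · intro c _
      simp [Function.update_idem, Function.update_self, Function.update_eq_self]
    · intro b hb
      have hb0 : 2 ≤ b 0 := (Finset.mem_filter.mp hb).2
      simp [Function.update_idem, Function.update_self, Nat.sub_add_cancel hb0,
        Function.update_eq_self]
    · intro c hc
      have hcs : ∑ i, c i = s - 1 := (Finset.mem_filter.mp hc).2
      exact (qdim_shift r k n c hr hn2 (by omega)).symm
  have key2 : ∑ c ∈ ((Fintype.piFinset (fun _ : Fin n => Finset.range (s + 1 + 1))).filter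
        (fun c => ∑ i, c i = s + 1)).filter (fun c => 2 ≤ c 0), qdimD r k (lamOf n c)
      = ∑ c ∈ (Fintype.piFinset (fun _ : Fin n => Finset.range (s + 1 + 1))).filter
        (fun c => ∑ i, c i = s + 1), qdimD r k (lamOf n c) := by
    refine Finset.sum_subset (Finset.filter_subset _ _) ?_
    intro c hcB hcB2
    have h0 : c 0 ≤ 1 := by
      by_contra h
      exact hcB2 (Finset.mem_filter.mpr ⟨hcB, by omega⟩)
    have hcsum : ∑ i, c i = s + 1 := (Finset.mem_filter.mp hcB).2
    exact qdim_vanish r k n c hr hn2 h0 (by omega)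
  exact key.trans key2
end
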